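/- For all integers n, k, m with n > k ≥ 1 and m ≥ 1, the number of compositions of n into k parts having exactly m parts that are at least 2 equals binom(n−k−1,m−1)·binom(k,m). -/

import Mathlib

/-- `μ` is a composition of `n` into `k` parts. -/
def IsCompositionOf (n k : ℕ) (μ : List ℕ) : Prop :=
  μ.length = k ∧ (∀ x ∈ μ, 1 ≤ x) ∧ μ.sum = n

open Finset

lemma countP_ofFn {k : ℕ} (f : Fin k → ℕ) (q : ℕ → Bool) :
    (List.ofFn f).countP q = (univ.filter fun i => q (f i) = true).card := by
  induction k with
  | zero => simp
  | succ k ih =>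
    rw [List.ofFn_succ, List.countP_cons, ih (fun i => f i.succ)]
    rw [Finset.card_filter, Finset.card_filter, Fin.sum_univ_succ]
    simp [Function.comp]
    omega

-- list ↔ function equiv
def listEquivFn (k : ℕ) (Q : List ℕ → Prop) :
    {μ : List ℕ // μ.length = k ∧ Q μ} ≃ {f : Fin k → ℕ // Q (List.ofFn f)} where
  toFun := fun μ => ⟨fun i => μ.1.get (Fin.cast μ.2.1.symm i), by
    have : List.ofFn (fun i => μ.1.get (Fin.cast μ.2.1.symm i)) = μ.1 := by
      obtain ⟨μ, hl, hq⟩ := μ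
      subst hl; simp [List.ofFn_get]
    rw [this]; exact μ.2.2⟩
  invFun := fun f => ⟨List.ofFn f.1, ⟨List.length_ofFn, by simpa using f.2⟩⟩
  left_inv := fun μ => by
    obtain ⟨μ, hl, hq⟩ := μ
    apply Subtype.ext
    subst hl; simp [List.ofFn_get]
  right_inv := fun f => by
    apply Subtype.ext
    funext i
    simp

lemma sum_sub_one {k : ℕ} (f : Fin k → ℕ) (h1 : ∀ i, 1 ≤ f i) :
    ∑ i, (f i - 1) = (∑ i, f i) - k := by
  have h : ∑ i, f i = ∑ i, ((f i - 1) + 1) := by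
    apply Finset.sum_congr rfl; intro i _; have := h1 i; omega
  rw [h, Finset.sum_add_distrib]; simp

def e2 (n k m : ℕ) (hkn : k ≤ n) :
    {f : Fin k → ℕ // (∀ i, 1 ≤ f i) ∧ ∑ i, f i = n ∧
        (univ.filter fun i => 2 ≤ f i).card = m} ≃
    {g : Fin k → ℕ // ∑ i, g i = n - k ∧ (univ.filter fun i => 1 ≤ g i).card = m} where
  toFun := fun f => ⟨fun i => f.1 i - 1, by
    obtain ⟨f, h1, hs, hc⟩ := f
    refine ⟨by rw [sum_sub_one f h1, hs], ?_⟩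
    show (univ.filter fun i => 1 ≤ f i - 1).card = m
    rw [← hc]
    congr 1
    apply Finset.filter_congr
    intro i _
    constructor <;> (intro h; omega)⟩
  invFun := fun g => ⟨fun i => g.1 i + 1, by
    obtain ⟨g, hs, hc⟩ := g
    refine ⟨fun i => Nat.succ_le_succ (Nat.zero_le _), ?_, ?_⟩
    · rw [Finset.sum_add_distrib, hs]
      simp only [Finset.sum_const, Finset.card_univ, Fintype.card_fin, smul_eq_mul, mul_one]
      omega
    · show (univ.filter fun i => 2 ≤ g i + 1).card = m
      rw [← hc]
      congr 1
      apply Finset.filter_congr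
      intro i _
      constructor <;> (intro h; omega)⟩
  left_inv := fun f => by
    apply Subtype.ext; funext i; have := f.2.1 i; simp; omega
  right_inv := fun g => by
    apply Subtype.ext; funext i; simp

def e4 (m N : ℕ) (hmN : m ≤ N) :
    {h : Fin m → ℕ // (∀ i, 1 ≤ h i) ∧ ∑ i, h i = N} ≃
    {h : Fin m → ℕ // ∑ i, h i = N - m} where
  toFun := fun f => ⟨fun i => f.1 i - 1, by
    obtain ⟨f, h1, hs⟩ := f
    rw [sum_sub_one f h1, hs]⟩
  invFun := fun g => ⟨fun i => g.1 i + 1, by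
    refine ⟨fun i => Nat.succ_le_succ (Nat.zero_le _), ?_⟩
    rw [Finset.sum_add_distrib, g.2]
    simp only [Finset.sum_const, Finset.card_univ, Fintype.card_fin, smul_eq_mul, mul_one]
    omega⟩
  left_inv := fun f => by
    apply Subtype.ext; funext i; have := f.2.1 i; simp; omega
  right_inv := fun g => by
    apply Subtype.ext; funext i; simp

lemma orderIsoOfFin_congr {α : Type*} [LinearOrder α] {s t : Finset α} (hst : s = t)
    {m : ℕ} (hs : s.card = m) (ht : t.card = m) (i : Fin m) :
    (↑(s.orderIsoOfFin hs i) : α) = ↑(t.orderIsoOfFin ht i) := by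
  subst hst; rfl

section E3
variable {k m N : ℕ}

lemma sum_over_iso {s : Finset (Fin k)} (hs : s.card = m) (g : Fin k → ℕ) :
    ∑ i : Fin m, g ((s.orderIsoOfFin hs i : Fin k)) = ∑ x ∈ s, g x := by
  rw [← Finset.sum_coe_sort s g]
  exact Equiv.sum_comp (s.orderIsoOfFin hs).toEquiv (fun x : s => g x)

def e3fun :
    {g : Fin k → ℕ // ∑ i, g i = N ∧ (univ.filter fun i => 1 ≤ g i).card = m} →
    {s : Finset (Fin k) // s.card = m} ×
      {h : Fin m → ℕ // (∀ i, 1 ≤ h i) ∧ ∑ i, h i = N} :=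
  fun g => ⟨⟨univ.filter fun i => 1 ≤ g.1 i, g.2.2⟩,
    ⟨fun i => g.1 (((univ.filter fun i => 1 ≤ g.1 i).orderIsoOfFin g.2.2 i : Fin k)),
      fun i => (Finset.mem_filter.mp
        ((univ.filter fun i => 1 ≤ g.1 i).orderIsoOfFin g.2.2 i).2).2,
      by
        rw [sum_over_iso g.2.2 g.1]
        rw [Finset.sum_filter_of_ne (by intro x _ hx; omega)]
        exact g.2.1⟩⟩

lemma e3fun_bij : Function.Bijective (e3fun (k := k) (m := m) (N := N)) := by
  constructor
  · rintro ⟨a, hsa, hca⟩ ⟨b, hsb, hcb⟩ hab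
    have h1 : (univ.filter fun i => 1 ≤ a i) = (univ.filter fun i => 1 ≤ b i) :=
      Subtype.ext_iff.mp (congrArg Prod.fst hab)
    have h2 := Subtype.ext_iff.mp (congrArg Prod.snd hab)
    have h2' : ∀ i : Fin m,
        a (((univ.filter fun i => 1 ≤ a i).orderIsoOfFin hca i : Fin k)) =
        b (((univ.filter fun i => 1 ≤ b i).orderIsoOfFin hcb i : Fin k)) :=
      fun i => congrFun h2 i
    apply Subtype.ext
    funext x
    show a x = b x
    by_cases hx : x ∈ (univ.filter fun i => 1 ≤ a i)
    · set iso := (univ.filter fun i => 1 ≤ a i).orderIsoOfFin hca with hiso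
      obtain ⟨i, hi⟩ : ∃ i, (iso i : Fin k) = x :=
        ⟨iso.symm ⟨x, hx⟩, by simp⟩
      rw [← hi, h2' i, orderIsoOfFin_congr h1.symm hcb hca]
    · have hxa : a x = 0 := by
        simp only [Finset.mem_filter, Finset.mem_univ, true_and] at hx; omega
      have hxb : b x = 0 := by
        rw [h1] at hx
        simp only [Finset.mem_filter, Finset.mem_univ, true_and] at hx; omega
      rw [hxa, hxb]
  · rintro ⟨⟨s, hs⟩, ⟨h, h1, hsum⟩⟩
    set g₀ : Fin k → ℕ :=
      fun x => if hx : x ∈ s then h ((s.orderIsoOfFin hs).symm ⟨x, hx⟩) else 0 with hg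
    have hg₀pos : ∀ x (hx : x ∈ s), g₀ x = h ((s.orderIsoOfFin hs).symm ⟨x, hx⟩) :=
      fun x hx => dif_pos hx
    have hg₀zero : ∀ x, x ∉ s → g₀ x = 0 := fun x hx => dif_neg hx
    have hset : (univ.filter fun x => 1 ≤ g₀ x) = s := by
      ext x
      simp only [Finset.mem_filter, Finset.mem_univ, true_and]
      constructor
      · intro hx1; by_contra hx; rw [hg₀zero x hx] at hx1; omega
      · intro hx; rw [hg₀pos x hx]; exact h1 _
    have hcard : (univ.filter fun x => 1 ≤ g₀ x).card = m := by rw [hset]; exact hs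
    have hiso : ∀ i : Fin m, g₀ ((s.orderIsoOfFin hs i : Fin k)) = h i := by
      intro i
      rw [hg₀pos _ (s.orderIsoOfFin hs i).2, Subtype.coe_eta, OrderIso.symm_apply_apply]
    have hsum0 : ∑ x, g₀ x = N := by
      rw [← Finset.sum_subset (Finset.subset_univ s) (fun x _ hx => hg₀zero x hx)]
      rw [← sum_over_iso hs, ← hsum]
      exact Finset.sum_congr rfl fun i _ => hiso i
    refine ⟨⟨g₀, hsum0, hcard⟩, ?_⟩
    refine Prod.ext (Subtype.ext hset) ?_
    apply Subtype.ext
    funext i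
    show g₀ (((univ.filter fun x => 1 ≤ g₀ x).orderIsoOfFin hcard i : Fin k)) = h i
    rw [orderIsoOfFin_congr hset hcard hs i]
    exact hiso i

end E3

lemma card_pos_tuples (m N : ℕ) (hm : 1 ≤ m) (hN : 1 ≤ N) :
    Nat.card {h : Fin m → ℕ // (∀ i, 1 ≤ h i) ∧ ∑ i, h i = N} = (N - 1).choose (m - 1) := by
  by_cases hmN : m ≤ N
  · rw [Nat.card_congr (e4 m N hmN),
      Nat.card_congr (Sym.equivNatSumOfFintype (Fin m) (N - m)).symm,
      Nat.card_eq_fintype_card, Sym.card_sym_eq_choose, Fintype.card_fin]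
    have h1 : m + (N - m) - 1 = N - 1 := by omega
    have h2 : N - m = (N - 1) - (m - 1) := by omega
    rw [h1, h2, Nat.choose_symm (by omega)]
  · have : IsEmpty {h : Fin m → ℕ // (∀ i, 1 ≤ h i) ∧ ∑ i, h i = N} := by
      constructor; rintro ⟨h, h1, hs⟩
      have hle : (m : ℕ) ≤ N := by
        calc (m : ℕ) = ∑ _i : Fin m, 1 := by simp
        _ ≤ ∑ i, h i := Finset.sum_le_sum fun i _ => h1 i
        _ = N := hs
      omega
    rw [Nat.card_of_isEmpty, Nat.choose_eq_zero_of_lt (by omega)]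

def e1 (n k m : ℕ) :
    {μ : List ℕ // IsCompositionOf n k μ ∧ μ.countP (fun x => 2 ≤ x) = m} ≃
    {f : Fin k → ℕ // (∀ i, 1 ≤ f i) ∧ ∑ i, f i = n ∧
      (univ.filter fun i => 2 ≤ f i).card = m} :=
  ((Equiv.subtypeEquivRight (fun μ => by unfold IsCompositionOf; tauto)).trans
    (listEquivFn k
      (fun μ => (∀ x ∈ μ, 1 ≤ x) ∧ μ.sum = n ∧ μ.countP (fun x => 2 ≤ x) = m))).trans
  (Equiv.subtypeEquivRight (fun f => by
    rw [List.sum_ofFn, countP_ofFn]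
    simp [List.forall_mem_ofFn_iff]))

theorem stmt8 (n k m : ℕ) (hk : 1 ≤ k) (hkn : k < n) (hm : 1 ≤ m) :
    Nat.card {μ : List ℕ // IsCompositionOf n k μ ∧ μ.countP (fun x => 2 ≤ x) = m} =
      (n - k - 1).choose (m - 1) * k.choose m := by
  rw [Nat.card_congr (e1 n k m), Nat.card_congr (e2 n k m hkn.le),
    Nat.card_eq_of_bijective _ e3fun_bij, Nat.card_prod,
    Nat.card_eq_fintype_card, Fintype.card_finset_len,
    card_pos_tuples m (n - k) hm (by omega), Fintype.card_fin, mul_comm]
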